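/- arXiv:math/0508639 — 3 statements merged into one kernel-verified Lean document; each statement's English description precedes it below -/
import Mathlib

section
/- For every positive integer l, the series ∑_{q=1}^{∞} (μ(q)²/φ(q)²) |c_q(l)| converges; in particular the series ∑_{q=1}^{∞} (μ(q)²/φ(q)²) c_q(l) converges absolutely. -/
/-!
Inserting `∑_{d ∣ gcd(k,q)} μ(d)` for the coprimality condition turns `c_q(n)` into
`∑_{d ∣ q} μ(d) · (q/d) · [q/d ∣ n]`, so `|c_q(n)| ≤ σ(|n|)` uniformly in `q`. For squarefree
`q` we have `φ(q) = ∏_{p ∣ q} (p - 1)`, and `p³ ≤ (p - 1)⁴` for `p ≥ 5`; the primes `2` and `3`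
cost a factor `16`, so `q^{3/2} ≤ 4 φ(q)²`. The series is therefore dominated by
`4 σ(l) ∑ q^{-3/2}`.
-/

/-- The Ramanujan sum `c_q(n) = ∑_{k=1, gcd(k,q)=1}^{q} e^{2πi k n / q}`. -/
noncomputable def ramanujanSum (q : ℕ) (n : ℤ) : ℂ :=
  ∑ k ∈ (Finset.Icc 1 q).filter (fun k => Nat.gcd k q = 1),
    Complex.exp (2 * Real.pi * Complex.I * k * n / q)

open Finset Complex ArithmeticFunction Real
open scoped ArithmeticFunction.Moebius ArithmeticFunction.sigma Nat

theorem sum_Icc_pow_of_pow_eq_one {K : Type*} [Field K] [DecidableEq K] {ζ : K} {m : ℕ}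
    (h : ζ ^ m = 1) : ∑ k ∈ Icc 1 m, ζ ^ k = if ζ = 1 then (m : K) else 0 := by
  split_ifs with hζ
  · simp [hζ]
  · rw [← Ico_add_one_right_eq_Icc, geom_sum_Ico hζ (Nat.le_add_left 1 m), pow_succ, h]
    simp

theorem sum_Icc_exp_eq_ite (m : ℕ) (n : ℤ) :
    ∑ k ∈ Icc 1 m, exp (2 * π * I * k * n / m) = if (m : ℤ) ∣ n then (m : ℂ) else 0 := by
  rcases eq_or_ne m 0 with rfl | hm
  · simp
  have hξ := isPrimitiveRoot_exp m hm
  have hterm (k : ℕ) : exp (2 * π * I * k * n / m) = (exp (2 * π * I / m) ^ n) ^ k := by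
    rw [← exp_int_mul, ← Complex.exp_nat_mul]; ring_nf
  have hpow : (exp (2 * π * I / m) ^ n) ^ m = 1 := by
    rw [← zpow_natCast, ← zpow_mul, mul_comm n, zpow_mul, zpow_natCast, hξ.pow_eq_one, one_zpow]
  simp only [hterm, sum_Icc_pow_of_pow_eq_one hpow, hξ.zpow_eq_one_iff_dvd]

theorem sum_filter_dvd_Icc_mul {M : Type*} [AddCommMonoid M] {d : ℕ} (hd : d ≠ 0) (m : ℕ)
    (f : ℕ → M) : ∑ k ∈ Icc 1 (d * m) with d ∣ k, f k = ∑ j ∈ Icc 1 m, f (d * j) := by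
  have hd := Nat.pos_of_ne_zero hd
  have himage : {k ∈ Icc 1 (d * m) | d ∣ k} = (Icc 1 m).image (d * ·) := by
    ext k
    simp only [mem_filter, mem_Icc, mem_image]
    constructor
    · rintro ⟨⟨hk1, hk2⟩, j, rfl⟩
      exact ⟨j, ⟨Nat.pos_of_mul_pos_left hk1, Nat.le_of_mul_le_mul_left hk2 hd⟩, rfl⟩
    · rintro ⟨j, ⟨hj1, hj2⟩, rfl⟩
      exact ⟨⟨Nat.mul_pos hd hj1, Nat.mul_le_mul_left d hj2⟩, dvd_mul_right _ _⟩
  rw [himage, sum_image fun _ _ _ _ h => Nat.eq_of_mul_eq_mul_left hd h]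

theorem sum_divisors_moebius (n : ℕ) : ∑ d ∈ n.divisors, μ d = if n = 1 then 1 else 0 := by
  have := congrArg (· n) moebius_mul_coe_zeta
  rwa [coe_mul_zeta_apply, one_apply] at this

theorem sum_filter_gcd_eq_one_eq_sum_moebius {M : Type*} [AddCommGroup M] (s : Finset ℕ)
    {q : ℕ} (hq : q ≠ 0) (f : ℕ → M) :
    ∑ k ∈ s with k.gcd q = 1, f k = ∑ d ∈ q.divisors, μ d • ∑ k ∈ s with d ∣ k, f k := by
  have hdiv (k : ℕ) : {d ∈ q.divisors | d ∣ k} = (k.gcd q).divisors := by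
    rw [← Nat.divisors_filter_dvd_of_dvd hq (Nat.gcd_dvd_right k q)]
    exact filter_congr fun d hd => by
      rw [Nat.dvd_gcd_iff, and_iff_left (Nat.dvd_of_mem_divisors hd)]
  calc ∑ k ∈ s with k.gcd q = 1, f k
      = ∑ k ∈ s, (∑ d ∈ (k.gcd q).divisors, μ d) • f k := by
        simp only [sum_divisors_moebius, ite_smul, one_smul, zero_smul, sum_filter]
    _ = ∑ k ∈ s, ∑ d ∈ q.divisors, if d ∣ k then μ d • f k else 0 := by
        simp only [← hdiv, sum_filter, sum_smul, ite_smul, zero_smul]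
    _ = ∑ d ∈ q.divisors, μ d • ∑ k ∈ s with d ∣ k, f k := by
        rw [sum_comm]; simp only [sum_filter, smul_sum, smul_ite, smul_zero]

theorem ramanujanSum_eq_sum_divisors (q : ℕ) (n : ℤ) :
    ramanujanSum q n =
      ∑ d ∈ q.divisors, μ d * if ((q / d : ℕ) : ℤ) ∣ n then ((q / d : ℕ) : ℂ) else 0 := by
  rcases eq_or_ne q 0 with rfl | hq
  · simp [ramanujanSum]
  rw [ramanujanSum, sum_filter_gcd_eq_one_eq_sum_moebius _ hq]
  refine sum_congr rfl fun d hd => ?_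
  obtain ⟨m, rfl⟩ := Nat.dvd_of_mem_divisors hd
  have hd0 : d ≠ 0 := left_ne_zero_of_mul hq
  rw [zsmul_eq_mul, sum_filter_dvd_Icc_mul hd0, Nat.mul_div_cancel_left _ (Nat.pos_of_ne_zero hd0),
    ← sum_Icc_exp_eq_ite]
  congr 1
  refine sum_congr rfl fun j _ => ?_
  congr 1
  push_cast
  field_simp

theorem norm_ramanujanSum_le (q : ℕ) {n : ℤ} (hn : n ≠ 0) :
    ‖ramanujanSum q n‖ ≤ σ 1 n.natAbs := by
  set T : ℕ → ℝ := fun e => if (e : ℤ) ∣ n then (e : ℝ) else 0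
  have hterm (d : ℕ) :
      ‖(μ d : ℂ) * if ((q / d : ℕ) : ℤ) ∣ n then ((q / d : ℕ) : ℂ) else 0‖ ≤ T (q / d) := by
    rw [norm_mul, Complex.norm_intCast]
    have hμ : |(μ d : ℝ)| ≤ 1 := by exact_mod_cast abs_moebius_le_one
    refine (mul_le_of_le_one_left (norm_nonneg _) hμ).trans_eq ?_
    simp only [T, apply_ite norm, Complex.norm_natCast, norm_zero]
  calc ‖ramanujanSum q n‖ ≤ ∑ d ∈ q.divisors, T (q / d) := by
        rw [ramanujanSum_eq_sum_divisors]
        exact (norm_sum_le _ _).trans (sum_le_sum fun d _ => hterm d)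
    _ = ∑ e ∈ q.divisors with ((e : ℕ) : ℤ) ∣ n, (e : ℝ) := by rw [Nat.sum_div_divisors, sum_filter]
    _ ≤ ∑ e ∈ n.natAbs.divisors, (e : ℝ) := by
        refine sum_le_sum_of_subset_of_nonneg (fun e he => ?_) fun _ _ _ => by positivity
        simp only [mem_filter, Nat.mem_divisors] at he ⊢
        exact ⟨Int.natCast_dvd.mp he.2, Int.natAbs_ne_zero.mpr hn⟩
    _ = σ 1 n.natAbs := by rw [sigma_one_apply, Nat.cast_sum]

theorem Nat.totient_eq_prod_primeFactors_sub_one {n : ℕ} (hn : Squarefree n) :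
    φ n = ∏ p ∈ n.primeFactors, (p - 1) := by
  have := Nat.totient_mul_prod_primeFactors n
  rw [Nat.prod_primeFactors_of_squarefree hn, mul_comm] at this
  exact Nat.eq_of_mul_eq_mul_left (Nat.pos_of_ne_zero hn.ne_zero) this

theorem Nat.Prime.pow_three_le_mul_sub_one_pow_four {p : ℕ} (hp : p.Prime) :
    p ^ 3 ≤ (if p = 2 then 8 else if p = 3 then 2 else 1) * (p - 1) ^ 4 := by
  split_ifs with h2 h3
  · subst h2; norm_num
  · subst h3; norm_num
  · have h5 : 5 ≤ p := by
      by_contra! h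
      have := hp.two_le
      interval_cases p <;> norm_num at *
    obtain ⟨k, rfl⟩ := Nat.exists_eq_add_of_le' h5
    rw [show k + 5 - 1 = k + 4 by omega, one_mul]
    nlinarith [sq_nonneg (k * k), sq_nonneg k]

theorem Nat.pow_three_le_sixteen_mul_totient_pow_four {n : ℕ} (hn : Squarefree n) :
    n ^ 3 ≤ 16 * φ n ^ 4 := by
  set c : ℕ → ℕ := fun p => if p = 2 then 8 else if p = 3 then 2 else 1
  have hc : ∏ p ∈ n.primeFactors, c p ≤ 16 :=
    calc ∏ p ∈ n.primeFactors, c p ≤ ∏ p ∈ n.primeFactors ∪ {2, 3}, c p :=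
          prod_le_prod_of_subset_of_one_le' subset_union_left fun p _ _ => by grind
      _ = ∏ p ∈ {2, 3}, c p := (prod_subset subset_union_right fun p _ hp => by grind).symm
      _ = 16 := by decide
  calc n ^ 3 = ∏ p ∈ n.primeFactors, p ^ 3 := by
        rw [prod_pow, Nat.prod_primeFactors_of_squarefree hn]
    _ ≤ ∏ p ∈ n.primeFactors, c p * (p - 1) ^ 4 := prod_le_prod' fun p hp =>
        (Nat.prime_of_mem_primeFactors hp).pow_three_le_mul_sub_one_pow_four
    _ = (∏ p ∈ n.primeFactors, c p) * φ n ^ 4 := by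
        rw [prod_mul_distrib, prod_pow, Nat.totient_eq_prod_primeFactors_sub_one hn]
    _ ≤ 16 * φ n ^ 4 := Nat.mul_le_mul_right _ hc

theorem moebius_sq_div_totient_sq_le (q : ℕ) :
    (μ q : ℝ) ^ 2 / (φ q : ℝ) ^ 2 ≤ 4 * ((q : ℝ) ^ (3 / 2 : ℝ))⁻¹ := by
  by_cases hq : Squarefree q
  · have hμ : (μ q : ℝ) ^ 2 = 1 := by exact_mod_cast moebius_sq_eq_one_of_squarefree hq
    have hq0 : 0 < q := Nat.pos_of_ne_zero hq.ne_zero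
    have hpow : ((q : ℝ) ^ (3 / 2 : ℝ)) ^ 2 = (q : ℝ) ^ 3 := by
      rw [← Real.rpow_natCast, ← Real.rpow_mul (Nat.cast_nonneg q)]; norm_num
    have hle : (q : ℝ) ^ (3 / 2 : ℝ) ≤ 4 * (φ q : ℝ) ^ 2 := by
      rw [← pow_le_pow_iff_left₀ (by positivity) (by positivity) two_ne_zero, hpow]
      calc (q : ℝ) ^ 3 ≤ 16 * (φ q : ℝ) ^ 4 := by
            exact_mod_cast Nat.pow_three_le_sixteen_mul_totient_pow_four hq
        _ = (4 * (φ q : ℝ) ^ 2) ^ 2 := by ring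
    have hφ0 : 0 < φ q := Nat.totient_pos.mpr hq0
    rw [hμ, ← div_eq_mul_inv, div_le_div_iff₀ (by positivity) (by positivity)]
    linarith
  · rw [moebius_eq_zero_of_not_squarefree hq]
    simp only [Int.cast_zero, ne_eq, OfNat.ofNat_ne_zero, not_false_eq_true, zero_pow, zero_div]
    positivity

theorem summable_moebius_sq_div_totient_sq :
    Summable fun q : ℕ => (μ q : ℝ) ^ 2 / (φ q : ℝ) ^ 2 :=
  ((Real.summable_nat_rpow_inv.mpr (by norm_num)).mul_left 4).of_nonneg_of_le
    (fun _ => by positivity) moebius_sq_div_totient_sq_le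

/-- The series `∑_{q ≥ 1} (μ(q)²/φ(q)²) |c_q(l)|` converges; in particular
`∑_{q ≥ 1} (μ(q)²/φ(q)²) c_q(l)` converges absolutely. -/
theorem summable_moebius_sq_div_totient_sq_mul_ramanujanSum (l : ℕ) (hl : 0 < l) :
    Summable (fun q : ℕ =>
      ((ArithmeticFunction.moebius q : ℝ)) ^ 2 / ((Nat.totient q : ℝ)) ^ 2 *
        ‖ramanujanSum q l‖) ∧
    Summable (fun q : ℕ =>
      ((ArithmeticFunction.moebius q : ℂ)) ^ 2 / ((Nat.totient q : ℂ)) ^ 2 *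
        ramanujanSum q l) := by
  have hl0 : (l : ℤ) ≠ 0 := by exact_mod_cast hl.ne'
  have habs : Summable fun q : ℕ => (μ q : ℝ) ^ 2 / (φ q : ℝ) ^ 2 * ‖ramanujanSum q l‖ :=
    (summable_moebius_sq_div_totient_sq.mul_right (σ 1 l : ℝ)).of_nonneg_of_le
      (fun _ => by positivity) fun q => by
        simpa using mul_le_mul_of_nonneg_left (norm_ramanujanSum_le q hl0) (by positivity)
  refine ⟨habs, Summable.of_norm (habs.congr fun q => ?_)⟩
  simp only [norm_mul, norm_div, norm_pow, Complex.norm_intCast, Complex.norm_natCast, sq_abs]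
end

section
/- Let m and l be positive integers. Then the absolutely convergent series over positive integers q coprime to m satisfies ∑_{q ≥ 1, gcd(q,m)=1} (μ(q)²/φ(q)²) c_q(l) = ∏_{p prime, p ∤ m} (1 + c_p(l)/(p−1)²), where the infinite product converges. -/
/-!
Grouping `k ∈ [1, q]` by `gcd(k, q)` gives `∑_{d ∣ q} c_d(n) = ∑_{k=1}^{q} e(kn/q) = q·[q ∣ n]`,
so by Möbius inversion `c_q(n) = ∑_{d ∣ (q, n)} μ(q/d) d`. Hence `q ↦ c_q(n)` is multiplicative
and `c_p(n) = -1` for primes `p ∤ n`. The summand `f(q) = [(q, m) = 1] μ(q)² c_q(n) / φ(q)²` is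
then multiplicative, supported on squarefree numbers and `O(p⁻²)` on primes. Bounding partial
sums of `|f|` by `∏_p (1 + |f(p)|) ≤ exp (∑_p |f(p)|)` gives absolute convergence, and the Euler
product for multiplicative functions identifies the sum with `∏_p (1 + f(p))`.
-/

open Finset ArithmeticFunction
open scoped ArithmeticFunction.Moebius Nat

lemma not_squarefree_prime_pow {p e : ℕ} (hp : p.Prime) (he : 2 ≤ e) :
    ¬ Squarefree (p ^ e) := by
  rw [Nat.squarefree_pow_iff hp.ne_one (by omega)]
  omega

lemma tsum_prime_pow_eq_of_squarefree_support {M : Type*} [AddCommMonoid M] [TopologicalSpace M]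
    [T2Space M] {g : ℕ → M} (hg : ∀ n, ¬ Squarefree n → g n = 0) {p : ℕ} (hp : p.Prime) :
    ∑' e, g (p ^ e) = g 1 + g p := by
  rw [tsum_eq_sum (s := range 2), sum_range_succ, sum_range_one, pow_zero, pow_one]
  intro e he
  rw [mem_range, not_lt] at he
  exact hg _ (not_squarefree_prime_pow hp he)

theorem ArithmeticFunction.IsMultiplicative.summable_norm_of_squarefree_support
    {R : Type*} [NormedCommRing R] [NormMulClass R] [NormOneClass R] {f : ArithmeticFunction R}
    (hf : f.IsMultiplicative) (hsq : ∀ n, ¬ Squarefree n → f n = 0)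
    (hprimes : Summable fun p : Nat.Primes => ‖f p‖) :
    Summable (‖f ·‖) := by
  have hnorm (n : ℕ) (hn : ¬ Squarefree n) : ‖f n‖ = 0 := by rw [hsq n hn, norm_zero]
  refine summable_of_sum_le (fun n => norm_nonneg _) (c := Real.exp (∑' p : Nat.Primes, ‖f p‖))
    fun u => ?_
  obtain ⟨N, hN⟩ : ∃ N, ∀ n ∈ u, n < N :=
    ⟨u.sup id + 1, fun n hn => Nat.lt_succ_of_le (le_sup (f := id) hn)⟩
  have hsmooth := (EulerProduct.summable_and_hasSum_smoothNumbers_prod_primesBelow_tsum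
    (f := (‖f ·‖)) (by simp [hf.map_one]) (fun hab => by simp [hf.map_mul_of_coprime hab])
    (fun {p} hp => summable_of_ne_finset_zero (s := range 2) fun e he =>
      by rw [norm_norm, hnorm (p ^ e) (not_squarefree_prime_pow hp (by simp at he; omega))]) N).2
  calc ∑ n ∈ u, ‖f n‖
      = ∑ n ∈ u, (N.smoothNumbers).indicator (‖f ·‖) n := by
        refine sum_congr rfl fun n hn => ?_
        rcases n.eq_zero_or_pos with rfl | hn0
        · simp [Nat.mem_smoothNumbers]
        · rw [Set.indicator_of_mem (Nat.mem_smoothNumbers_of_lt hn0 (hN n hn))]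
    _ ≤ ∏ p ∈ N.primesBelow, ∑' e, ‖f (p ^ e)‖ :=
        sum_le_hasSum u (fun n _ => Set.indicator_nonneg (fun _ _ => norm_nonneg _) n)
          (hasSum_subtype_iff_indicator.mp hsmooth)
    _ = ∏ p ∈ N.primesBelow, (1 + ‖f p‖) := by
        refine prod_congr rfl fun p hp => ?_
        rw [tsum_prime_pow_eq_of_squarefree_support hnorm (Nat.prime_of_mem_primesBelow hp),
          hf.map_one, norm_one]
    _ ≤ Real.exp (∑ p ∈ N.primesBelow, ‖f p‖) :=
        Real.prod_one_add_le_exp_sum _ fun _ => norm_nonneg _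
    _ ≤ Real.exp (∑' p : Nat.Primes, ‖f p‖) := by
        gcongr
        rw [← filter_true_of_mem (s := N.primesBelow) fun p hp => Nat.prime_of_mem_primesBelow hp,
          ← sum_subtype_eq_sum_filter]
        exact hprimes.sum_le_tsum (ι := Nat.Primes) (N.primesBelow.subtype Nat.Prime) fun _ _ =>
          norm_nonneg _

lemma sum_Icc_pow_eq_ite {z : ℂ} {q : ℕ} (hq : z ^ q = 1) :
    ∑ k ∈ Icc 1 q, z ^ k = if z = 1 then (q : ℂ) else 0 := by
  split_ifs with hz
  · simp [hz]
  · rw [← Ico_add_one_right_eq_Icc, geom_sum_Ico hz (by omega), pow_succ, hq, one_mul, pow_one,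
      sub_self, zero_div]

lemma sum_exp_two_pi_I_mul_div {q : ℕ} (hq : 0 < q) (n : ℤ) :
    ∑ k ∈ Icc 1 q, Complex.exp (2 * Real.pi * Complex.I * k * n / q)
      = if (q : ℤ) ∣ n then (q : ℂ) else 0 := by
  have hζ := Complex.isPrimitiveRoot_exp q hq.ne'
  set ζ := Complex.exp (2 * Real.pi * Complex.I / q)
  have hterm (k : ℕ) : Complex.exp (2 * Real.pi * Complex.I * k * n / q) = (ζ ^ n) ^ k := by
    rw [← zpow_natCast, ← zpow_mul, ← Complex.exp_int_mul]
    push_cast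
    ring_nf
  have hpow : (ζ ^ n) ^ q = 1 := by
    rw [← zpow_natCast, ← zpow_mul, mul_comm, zpow_mul, zpow_natCast, hζ.pow_eq_one, one_zpow]
  simp only [hterm, sum_Icc_pow_eq_ite hpow, hζ.zpow_eq_one_iff_dvd]

lemma sum_exp_filter_gcd_eq_ramanujanSum {g d : ℕ} (hg : 0 < g) (n : ℤ) :
    ∑ k ∈ Icc 1 (g * d) with k.gcd (g * d) = g,
        Complex.exp (2 * Real.pi * Complex.I * k * n / (g * d : ℕ))
      = ramanujanSum d n := by
  symm
  refine sum_nbij (g * ·) ?_ (fun a _ b _ h => Nat.eq_of_mul_eq_mul_left hg h) ?_ ?_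
  · intro j hj
    simp only [mem_filter, mem_Icc] at hj ⊢
    refine ⟨⟨Nat.mul_pos hg (by omega), Nat.mul_le_mul_left g hj.1.2⟩, ?_⟩
    rw [Nat.gcd_mul_left, hj.2, mul_one]
  · intro k hk
    simp only [coe_filter, mem_Icc, Set.mem_ofPred_eq] at hk
    obtain ⟨j, rfl⟩ : g ∣ k := hk.2 ▸ Nat.gcd_dvd_left k (g * d)
    refine ⟨j, ?_, rfl⟩
    rw [Nat.gcd_mul_left, mul_eq_left₀ hg.ne'] at hk
    simp only [coe_filter, mem_Icc, Set.mem_ofPred_eq]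
    exact ⟨⟨Nat.pos_of_ne_zero (by rintro rfl; simp at hk), Nat.le_of_mul_le_mul_left hk.1.2 hg⟩,
      hk.2⟩
  · intro j _
    have : (g : ℂ) ≠ 0 := by exact_mod_cast hg.ne'
    push_cast
    field_simp

lemma sum_ramanujanSum_divisors {q : ℕ} (hq : 0 < q) (n : ℤ) :
    ∑ d ∈ q.divisors, ramanujanSum d n = if (q : ℤ) ∣ n then (q : ℂ) else 0 := by
  rw [← sum_exp_two_pi_I_mul_div hq, ← Nat.sum_div_divisors,
    ← sum_fiberwise_of_maps_to (s := Icc 1 q) (t := q.divisors) (g := fun k => k.gcd q)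
      (fun k _ => Nat.mem_divisors.mpr ⟨Nat.gcd_dvd_right k q, hq.ne'⟩)]
  refine sum_congr rfl fun g hg => ?_
  obtain ⟨d, rfl⟩ := Nat.dvd_of_mem_divisors hg
  rw [Nat.mul_div_cancel_left d (Nat.pos_of_mul_pos_right hq),
    sum_exp_filter_gcd_eq_ramanujanSum (Nat.pos_of_mul_pos_right hq)]

noncomputable def idOnDivisors (n : ℤ) : ArithmeticFunction ℂ :=
  ⟨fun d => if (d : ℤ) ∣ n then (d : ℂ) else 0, by simp⟩

lemma idOnDivisors_apply (n : ℤ) (d : ℕ) :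
    idOnDivisors n d = if (d : ℤ) ∣ n then (d : ℂ) else 0 := rfl

lemma isMultiplicative_idOnDivisors (n : ℤ) : (idOnDivisors n).IsMultiplicative := by
  refine ⟨by simp [idOnDivisors_apply], fun {a b} hab => ?_⟩
  have hdvd : ((a * b : ℕ) : ℤ) ∣ n ↔ (a : ℤ) ∣ n ∧ (b : ℤ) ∣ n := by
    push_cast
    exact ⟨fun h => ⟨dvd_of_mul_right_dvd h, dvd_of_mul_left_dvd h⟩,
      fun h => hab.isCoprime.mul_dvd h.1 h.2⟩
  simp only [idOnDivisors_apply, hdvd]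
  split_ifs <;> simp_all

theorem ramanujanSum_eq_moebius_mul (q : ℕ) (n : ℤ) :
    ramanujanSum q n = ((μ : ArithmeticFunction ℂ) * idOnDivisors n) q := by
  rcases q.eq_zero_or_pos with rfl | hq
  · simp [ramanujanSum]
  rw [← sum_eq_iff_sum_mul_moebius_eq.mp (fun q hq => sum_ramanujanSum_divisors hq n) q hq,
    mul_apply]
  rfl

lemma isMultiplicative_moebius_mul_idOnDivisors (n : ℤ) :
    ((μ : ArithmeticFunction ℂ) * idOnDivisors n).IsMultiplicative :=
  isMultiplicative_moebius.intCast.mul (isMultiplicative_idOnDivisors n)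

lemma ramanujanSum_one (n : ℤ) : ramanujanSum 1 n = 1 := by
  simpa using sum_ramanujanSum_divisors one_pos n

lemma ramanujanSum_mul_of_coprime {a b : ℕ} (hab : a.Coprime b) (n : ℤ) :
    ramanujanSum (a * b) n = ramanujanSum a n * ramanujanSum b n := by
  simp only [ramanujanSum_eq_moebius_mul,
    (isMultiplicative_moebius_mul_idOnDivisors n).map_mul_of_coprime hab]

lemma ramanujanSum_prime {p : ℕ} (hp : p.Prime) (n : ℤ) :
    ramanujanSum p n = (if (p : ℤ) ∣ n then (p : ℂ) else 0) - 1 := by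
  have h := sum_ramanujanSum_divisors hp.pos n
  rw [hp.sum_divisors, ramanujanSum_one] at h
  exact eq_sub_of_add_eq h

noncomputable def coprimeRamanujanTerm (m : ℕ) (n : ℤ) : ArithmeticFunction ℂ :=
  ⟨fun q => if q.Coprime m then (μ q : ℂ) ^ 2 / (φ q : ℂ) ^ 2 * ramanujanSum q n else 0,
    by simp⟩

lemma coprimeRamanujanTerm_apply (m : ℕ) (n : ℤ) (q : ℕ) :
    coprimeRamanujanTerm m n q =
      if q.Coprime m then (μ q : ℂ) ^ 2 / (φ q : ℂ) ^ 2 * ramanujanSum q n else 0 := rfl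

lemma isMultiplicative_coprimeRamanujanTerm (m : ℕ) (n : ℤ) :
    (coprimeRamanujanTerm m n).IsMultiplicative := by
  refine ⟨by simp [coprimeRamanujanTerm_apply, ramanujanSum_one], fun {a b} hab => ?_⟩
  simp only [coprimeRamanujanTerm_apply, Nat.coprime_mul_iff_left,
    isMultiplicative_moebius.map_mul_of_coprime hab, Nat.totient_mul hab,
    ramanujanSum_mul_of_coprime hab]
  by_cases ha : a.Coprime m
  · by_cases hb : b.Coprime m
    · rw [if_pos ⟨ha, hb⟩, if_pos ha, if_pos hb]
      push_cast
      ring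
    · rw [if_neg fun h => hb h.2, if_neg hb, mul_zero]
  · rw [if_neg fun h => ha h.1, if_neg ha, zero_mul]

lemma coprimeRamanujanTerm_eq_zero_of_not_squarefree (m : ℕ) (n : ℤ) {q : ℕ}
    (hq : ¬ Squarefree q) : coprimeRamanujanTerm m n q = 0 := by
  simp [coprimeRamanujanTerm_apply, moebius_eq_zero_of_not_squarefree hq]

lemma coprimeRamanujanTerm_prime (m : ℕ) (n : ℤ) {p : ℕ} (hp : p.Prime) :
    coprimeRamanujanTerm m n p = if p ∣ m then 0 else ramanujanSum p n / ((p : ℂ) - 1) ^ 2 := by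
  rw [coprimeRamanujanTerm_apply]
  by_cases hpm : p ∣ m
  · rw [if_neg (by rwa [hp.coprime_iff_not_dvd, not_not]), if_pos hpm]
  · rw [if_pos (hp.coprime_iff_not_dvd.mpr hpm), if_neg hpm, moebius_apply_prime hp,
      Nat.totient_prime hp, Nat.cast_sub hp.one_le]
    push_cast
    ring

lemma norm_coprimeRamanujanTerm_prime_le (m : ℕ) {n : ℤ} {p : ℕ} (hp : p.Prime)
    (hpn : ¬ (p : ℤ) ∣ n) : ‖coprimeRamanujanTerm m n p‖ ≤ 4 / (p : ℝ) ^ 2 := by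
  have hp2 : (2 : ℝ) ≤ p := by exact_mod_cast hp.two_le
  have hnorm : ‖(p : ℂ) - 1‖ = (p : ℝ) - 1 := by
    rw [show (p : ℂ) - 1 = ((p - 1 : ℝ) : ℂ) by push_cast; rfl, Complex.norm_real,
      Real.norm_of_nonneg (by linarith)]
  rw [coprimeRamanujanTerm_prime m n hp, ramanujanSum_prime hp, if_neg hpn]
  split_ifs
  · rw [norm_zero]; positivity
  · rw [zero_sub, norm_div, norm_neg, norm_one, norm_pow, hnorm,
      div_le_div_iff₀ (by nlinarith) (by positivity)]
    nlinarith

lemma summable_norm_coprimeRamanujanTerm (m : ℕ) {n : ℤ} (hn : n ≠ 0) :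
    Summable (‖coprimeRamanujanTerm m n ·‖) := by
  refine (isMultiplicative_coprimeRamanujanTerm m n).summable_norm_of_squarefree_support
    (fun q hq => coprimeRamanujanTerm_eq_zero_of_not_squarefree m n hq) ?_
  have hlarge : ∀ᶠ p : Nat.Primes in Filter.cofinite, n.natAbs < p :=
    (Nat.cofinite_eq_atTop ▸ Subtype.val_injective.tendsto_cofinite).eventually_gt_atTop _
  refine Summable.of_norm_bounded_eventually (g := fun p : Nat.Primes => 4 / (p : ℝ) ^ 2) ?_ ?_
  · exact (((Real.summable_nat_pow_inv.mpr one_lt_two).mul_left 4).comp_injective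
      Subtype.val_injective).congr fun p => (div_eq_mul_inv _ _).symm
  · filter_upwards [hlarge] with p hp
    rw [norm_norm]
    refine norm_coprimeRamanujanTerm_prime_le m p.prop fun hdvd => ?_
    have := Nat.le_of_dvd (Int.natAbs_pos.mpr hn) (Int.natCast_dvd.mp hdvd)
    omega

lemma hasSum_coprimeRamanujanTerm (m : ℕ) {n : ℤ} (hn : n ≠ 0) :
    HasSum (fun q : {q : ℕ // 0 < q ∧ q.Coprime m} =>
      (μ (q : ℕ) : ℂ) ^ 2 / (φ (q : ℕ) : ℂ) ^ 2 * ramanujanSum q n)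
      (∑' q, coprimeRamanujanTerm m n q) := by
  refine ((Subtype.val_injective.hasSum_iff fun q hq => ?_).mpr
    (summable_norm_coprimeRamanujanTerm m hn).of_norm.hasSum).congr_fun
      fun q => (if_pos q.2.2).symm
  rcases q.eq_zero_or_pos with rfl | hq0
  · exact ArithmeticFunction.map_zero
  · exact if_neg fun hcop => hq ⟨⟨q, hq0, hcop⟩, rfl⟩

lemma hasProd_coprimeRamanujanTerm (m : ℕ) {n : ℤ} (hn : n ≠ 0) :
    HasProd (fun p : {p : ℕ // p.Prime ∧ ¬ p ∣ m} =>
      1 + ramanujanSum p n / ((p : ℂ) - 1) ^ 2) (∑' q, coprimeRamanujanTerm m n q) := by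
  have hF := isMultiplicative_coprimeRamanujanTerm m n
  have hinj := (Subtype.impEmbedding (fun p => p.Prime ∧ ¬ p ∣ m) Nat.Prime
    fun _ hp => hp.1).injective
  have hlocal {p : ℕ} (hp : p.Prime) :
      ∑' e, coprimeRamanujanTerm m n (p ^ e) = 1 + coprimeRamanujanTerm m n p := by
    rw [tsum_prime_pow_eq_of_squarefree_support
      (fun q hq => coprimeRamanujanTerm_eq_zero_of_not_squarefree m n hq) hp, hF.map_one]
  refine ((hinj.hasProd_iff fun p hp => ?_).mpr
    (hF.eulerProduct_hasProd (summable_norm_coprimeRamanujanTerm m hn))).congr_fun fun p => ?_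
  · have hpm : (p : ℕ) ∣ m := by_contra fun hpm => hp ⟨⟨p, p.prop, hpm⟩, rfl⟩
    rw [hlocal p.prop, coprimeRamanujanTerm_prime m n p.prop, if_pos hpm, add_zero]
  · show _ = ∑' e, coprimeRamanujanTerm m n ((p : ℕ) ^ e)
    rw [hlocal p.2.1, coprimeRamanujanTerm_prime m n p.2.1, if_neg p.2.2]

theorem eulerProduct_ramanujanSum_coprime_general (m l : ℕ) (hl : 0 < l) :
    Summable (fun q : {q : ℕ // 0 < q ∧ Nat.Coprime q m} =>
      ((ArithmeticFunction.moebius (q : ℕ) : ℂ)) ^ 2 / ((Nat.totient (q : ℕ) : ℂ)) ^ 2 *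
        ramanujanSum (q : ℕ) l) ∧
    Multipliable (fun p : {p : ℕ // p.Prime ∧ ¬ (p ∣ m)} =>
      1 + ramanujanSum (p : ℕ) l / (((p : ℕ) : ℂ) - 1) ^ 2) ∧
    (∑' q : {q : ℕ // 0 < q ∧ Nat.Coprime q m},
        ((ArithmeticFunction.moebius (q : ℕ) : ℂ)) ^ 2 / ((Nat.totient (q : ℕ) : ℂ)) ^ 2 *
          ramanujanSum (q : ℕ) l)
      = ∏' p : {p : ℕ // p.Prime ∧ ¬ (p ∣ m)},
          (1 + ramanujanSum (p : ℕ) l / (((p : ℕ) : ℂ) - 1) ^ 2) := by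
  have hl' : (l : ℤ) ≠ 0 := by exact_mod_cast hl.ne'
  have hseries := hasSum_coprimeRamanujanTerm m hl'
  have hprod := hasProd_coprimeRamanujanTerm m hl'
  exact ⟨hseries.summable, hprod.multipliable, hseries.tsum_eq.trans hprod.tprod_eq.symm⟩

/-- Euler product: `∑_{q ≥ 1, (q,m)=1} (μ(q)²/φ(q)²) c_q(l)
= ∏_{p prime, p ∤ m} (1 + c_p(l)/(p−1)²)`, with absolute convergence of the series
and convergence of the product. -/
theorem eulerProduct_ramanujanSum_coprime (m l : ℕ) (hm : 0 < m) (hl : 0 < l) :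
    Summable (fun q : {q : ℕ // 0 < q ∧ Nat.Coprime q m} =>
      ((ArithmeticFunction.moebius (q : ℕ) : ℂ)) ^ 2 / ((Nat.totient (q : ℕ) : ℂ)) ^ 2 *
        ramanujanSum (q : ℕ) l) ∧
    Multipliable (fun p : {p : ℕ // p.Prime ∧ ¬ (p ∣ m)} =>
      1 + ramanujanSum (p : ℕ) l / (((p : ℕ) : ℂ) - 1) ^ 2) ∧
    (∑' q : {q : ℕ // 0 < q ∧ Nat.Coprime q m},
        ((ArithmeticFunction.moebius (q : ℕ) : ℂ)) ^ 2 / ((Nat.totient (q : ℕ) : ℂ)) ^ 2 *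
          ramanujanSum (q : ℕ) l)
      = ∏' p : {p : ℕ // p.Prime ∧ ¬ (p ∣ m)},
          (1 + ramanujanSum (p : ℕ) l / (((p : ℕ) : ℂ) - 1) ^ 2) :=
  eulerProduct_ramanujanSum_coprime_general m l hl
end

section
/- Let a, b be coprime positive integers, let q, q' be squarefree positive integers, and let k, k₁ be integers with gcd(k, q) = 1 and gcd(k₁, q') = 1. If k/q = (k₁ b)/(q' a) as rational numbers, then there exist positive integers d₁, d₂, q₁ with d₁ | a, d₂ | b, gcd(q₁, ab) = 1, q = d₁ q₁, q' = d₂ q₁, and (a/d₁) | k₁. -/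
/-! Cross-multiplying gives `k q' a = k₁ b q`. Since `k` is prime to `q` and `k₁` to `q'`, this
yields `q ∣ q' a` and `q' ∣ q b`. A common factor `g` of `q'` and `a` is prime to `k₁ b`, so `g²`
divides `q`; squarefreeness of `q` (and symmetrically of `q'`) thus makes `q'` prime to `a` and `q`
prime to `b`. Writing `q₁ = gcd(q, q')`, `q = d₁ q₁`, `q' = d₂ q₁` with `d₁, d₂` coprime, the two
divisibilities become `d₁ ∣ a` and `d₂ ∣ b`, and cancelling `d₁ q₁` leaves
`k d₂ (a / d₁) = k₁ b`, whence `a / d₁ ∣ k₁`. -/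

theorem isUnit_of_dvd_of_mul_dvd_of_squarefree {R : Type*} [CommSemiring R] {g x y u v n : R}
    (hn : Squarefree n) (hxu : IsCoprime x u) (hyv : IsCoprime y v) (h : x * y ∣ u * v * n)
    (hgx : g ∣ x) (hgy : g ∣ y) : IsUnit g := by
  have hguv : IsCoprime g (u * v) :=
    (hxu.of_isCoprime_of_dvd_left hgx).mul_right (hyv.of_isCoprime_of_dvd_left hgy)
  refine hn g ((hguv.mul_left hguv).dvd_of_dvd_mul_left ?_)
  exact (mul_dvd_mul hgx hgy).trans h

theorem Int.isCoprime_of_mul_dvd_of_squarefree {x y u v n : ℤ} (hn : Squarefree n)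
    (hxu : IsCoprime x u) (hyv : IsCoprime y v) (h : x * y ∣ u * v * n) : IsCoprime x y := by
  rw [Int.isCoprime_iff_gcd_eq_one]
  simpa using Int.isUnit_iff_natAbs_eq.mp <| isUnit_of_dvd_of_mul_dvd_of_squarefree hn hxu hyv h
    (Int.gcd_dvd_left x y) (Int.gcd_dvd_right x y)

theorem Nat.dvd_of_mul_dvd_mul_of_coprime {m n g a : ℕ} (hg : 0 < g) (hmn : m.Coprime n)
    (h : m * g ∣ n * g * a) : m ∣ a :=
  hmn.dvd_of_dvd_mul_left (Nat.dvd_of_mul_dvd_mul_right hg (by rwa [mul_right_comm]))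

theorem exists_factorization_of_rat_eq_general (a b q q' : ℕ) (k k₁ : ℤ)
    (ha : 0 < a) (hq : 0 < q) (hq' : 0 < q')
    (hab : Nat.Coprime a b) (hsq : Squarefree q) (hsq' : Squarefree q')
    (hkq : Int.gcd k q = 1) (hk1q' : Int.gcd k₁ q' = 1)
    (heq : (k : ℚ) / (q : ℚ) = ((k₁ : ℚ) * (b : ℚ)) / ((q' : ℚ) * (a : ℚ))) :
    ∃ d₁ d₂ q₁ : ℕ, 0 < d₁ ∧ 0 < d₂ ∧ 0 < q₁ ∧
      d₁ ∣ a ∧ d₂ ∣ b ∧ Nat.Coprime q₁ (a * b) ∧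
      q = d₁ * q₁ ∧ q' = d₂ * q₁ ∧ ((a / d₁ : ℕ) : ℤ) ∣ k₁ := by
  have hcross : k * (q' * a) = k₁ * b * q := by
    rw [div_eq_div_iff (by positivity) (by positivity)] at heq
    exact_mod_cast heq
  have hkqZ : IsCoprime k q := Int.isCoprime_iff_gcd_eq_one.mpr hkq
  have hk₁q' : IsCoprime k₁ q' := Int.isCoprime_iff_gcd_eq_one.mpr hk1q'
  have habZ : IsCoprime (a : ℤ) b := Nat.isCoprime_iff_coprime.mpr hab
  have hq'a : q'.Coprime a := Nat.isCoprime_iff_coprime.mp <|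
    Int.isCoprime_of_mul_dvd_of_squarefree (Int.squarefree_natCast.mpr hsq) hk₁q'.symm habZ
      ⟨k, by linear_combination -hcross⟩
  have hqb : q.Coprime b := Nat.isCoprime_iff_coprime.mp <|
    Int.isCoprime_of_mul_dvd_of_squarefree (Int.squarefree_natCast.mpr hsq') hkqZ.symm habZ.symm
      ⟨k₁, by linear_combination hcross⟩
  have hqa : q ∣ q' * a := Int.natCast_dvd_natCast.mp <| by
    push_cast; exact hkqZ.symm.dvd_of_dvd_mul_left ⟨k₁ * b, by linear_combination hcross⟩
  have hq'b : q' ∣ q * b := Int.natCast_dvd_natCast.mp <| by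
    push_cast; exact hk₁q'.symm.dvd_of_dvd_mul_left ⟨k * a, by linear_combination -hcross⟩
  obtain ⟨q₁, d₁, d₂, hq₁, hd, rfl, rfl⟩ := Nat.exists_coprime' (Nat.gcd_pos_of_pos_left q' hq)
  have hd₁ : 0 < d₁ := Nat.pos_of_mul_pos_right hq
  have hd₂ : 0 < d₂ := Nat.pos_of_mul_pos_right hq'
  obtain ⟨a', rfl⟩ : d₁ ∣ a := Nat.dvd_of_mul_dvd_mul_of_coprime hq₁ hd hqa
  refine ⟨d₁, d₂, q₁, hd₁, hd₂, hq₁, dvd_mul_right d₁ a',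
    Nat.dvd_of_mul_dvd_mul_of_coprime hq₁ hd.symm hq'b,
    (hq'a.coprime_dvd_left (dvd_mul_left q₁ d₂)).mul_right
      (hqb.coprime_dvd_left (dvd_mul_left q₁ d₁)), rfl, rfl, ?_⟩
  rw [Nat.mul_div_cancel_left a' hd₁]
  have hd₁q₁ : ((d₁ * q₁ : ℕ) : ℤ) ≠ 0 := by positivity
  refine (Nat.isCoprime_iff_coprime.mpr hab.coprime_mul_left).dvd_of_dvd_mul_right <|
    (mul_dvd_mul_iff_right hd₁q₁).mp ⟨k * d₂, ?_⟩
  push_cast at hcross ⊢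
  linear_combination -hcross

/-- If `gcd(a,b) = 1`, `q, q'` are squarefree, `gcd(k,q) = 1`, `gcd(k₁,q') = 1`, and
`k/q = k₁ b /(q' a)` as rationals, then `q = d₁ q₁`, `q' = d₂ q₁` for some `d₁ | a`,
`d₂ | b`, `gcd(q₁, ab) = 1`, and `(a/d₁) | k₁`. -/
theorem exists_factorization_of_rat_eq (a b q q' : ℕ) (k k₁ : ℤ)
    (ha : 0 < a) (hb : 0 < b) (hq : 0 < q) (hq' : 0 < q')
    (hab : Nat.Coprime a b) (hsq : Squarefree q) (hsq' : Squarefree q')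
    (hkq : Int.gcd k q = 1) (hk1q' : Int.gcd k₁ q' = 1)
    (heq : (k : ℚ) / (q : ℚ) = ((k₁ : ℚ) * (b : ℚ)) / ((q' : ℚ) * (a : ℚ))) :
    ∃ d₁ d₂ q₁ : ℕ, 0 < d₁ ∧ 0 < d₂ ∧ 0 < q₁ ∧
      d₁ ∣ a ∧ d₂ ∣ b ∧ Nat.Coprime q₁ (a * b) ∧
      q = d₁ * q₁ ∧ q' = d₂ * q₁ ∧ ((a / d₁ : ℕ) : ℤ) ∣ k₁ :=
  exists_factorization_of_rat_eq_general a b q q' k k₁ ha hq hq' hab hsq hsq' hkq hk1q' heq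
end
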